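/- arXiv:math/0507001 — 3 statements merged into one kernel-verified Lean document; each statement's English description precedes it below -/
import Mathlib

section
/- Let d ≥ 1 be an integer and set ν₀(d) := max{m ∈ ℕ≥1 : φ(m) ≤ d}, where φ is Euler's totient function (this maximum exists since φ(m) → ∞). Let K be a number field with [K : ℚ] ≤ d, let α, β be nonzero elements of K, and for each integer ν ≥ 0 put u_ν := ∑_{j=0}^{ν} α^j·β^{ν−j}. If u_ν = 0 for some ν ≥ 1, then u_ν = 0 for some ν with 1 ≤ ν ≤ ν₀(d) − 1. (Equivalently: either u_ν ≠ 0 for all ν ≥ 0, or there exists ν ≤ ν₀(d) − 1 with u_ν = 0.) -/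
/-!
Writing `ζ = α / β`, one has `u ν = β ^ ν * (1 + ζ + ⋯ + ζ ^ ν)`, so in characteristic zero
`u ν = 0` forces `ζ` to be a root of unity different from `1`. If `m > 1` is its order, then
`u (m - 1) = 0`; and as `ζ` is a primitive `m`-th root of unity in `K` and the `m`-th cyclotomic
polynomial is irreducible over `ℚ`, `φ m ≤ [K : ℚ] ≤ d`, i.e. `m ≤ ν₀(d)`. The supremum defining
`ν₀(d)` is attained because `n ≤ 2 φ(n)²`.
-/

open scoped Classical

/-- `ν₀ d` is the largest positive integer `m` with `φ(m) ≤ d` (the set is bounded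
since `φ(m) → ∞`). -/
noncomputable def nu0 (d : ℕ) : ℕ := sSup {m : ℕ | 0 < m ∧ Nat.totient m ≤ d}

open Finset

namespace Nat

theorem pow_le_totient_sq_of_prime_of_ne_two {p : ℕ} (hp : p.Prime) (hp2 : p ≠ 2) (k : ℕ) :
    p ^ (k + 1) ≤ φ (p ^ (k + 1)) ^ 2 := by
  have hp3 : 3 ≤ p := lt_of_le_of_ne hp.two_le (Ne.symm hp2)
  have hp_le : p ≤ (p - 1) ^ 2 := by
    obtain ⟨c, rfl⟩ : ∃ c, p = c + 3 := ⟨p - 3, by omega⟩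
    rw [show c + 3 - 1 = c + 2 by omega]
    nlinarith
  rw [totient_prime_pow_succ hp, mul_pow, pow_succ]
  exact Nat.mul_le_mul (Nat.le_self_pow two_ne_zero _) hp_le

theorem le_totient_sq_of_odd {n : ℕ} (hn : Odd n) : n ≤ φ n ^ 2 := by
  induction n using recOnPosPrimePosCoprime with
  | prime_pow p k hp hk =>
    obtain ⟨k, rfl⟩ := exists_eq_succ_of_ne_zero hk.ne'
    have hp2 : p ≠ 2 := by
      rintro rfl
      exact Nat.not_even_iff_odd.mpr hn (even_two.pow_of_ne_zero (succ_ne_zero k))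
    exact pow_le_totient_sq_of_prime_of_ne_two hp hp2 k
  | zero => simp
  | one => simp
  | coprime a b _ _ hab iha ihb =>
    rw [totient_mul hab, mul_pow]
    exact Nat.mul_le_mul (iha (odd_mul.mp hn).1) (ihb (odd_mul.mp hn).2)

theorem le_two_mul_totient_sq (n : ℕ) : n ≤ 2 * φ n ^ 2 := by
  induction n using evenOddRec with
  | h0 => simp
  | h_even n ih =>
    rcases even_or_odd n with hn | hn
    · rw [totient_two_mul_of_even hn]
      nlinarith
    · rw [totient_two_mul_of_odd hn]
      linarith [le_totient_sq_of_odd hn]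
  | h_odd n _ => linarith [le_totient_sq_of_odd (odd_two_mul_add_one n)]

theorem finite_setOf_totient_le (d : ℕ) : {m | φ m ≤ d}.Finite :=
  (Set.finite_Iic (2 * d ^ 2)).subset fun m hm =>
    (le_two_mul_totient_sq m).trans (by gcongr; exact hm)

end Nat

theorem le_nu0 {d m : ℕ} (hm : 0 < m) (h : m.totient ≤ d) : m ≤ nu0 d :=
  le_csSup ((Nat.finite_setOf_totient_le d).subset fun _ hk => hk.2).bddAbove ⟨hm, h⟩

theorem IsPrimitiveRoot.totient_le_finrank_rat {L : Type*} [CommRing L] [IsDomain L]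
    [Algebra ℚ L] [FiniteDimensional ℚ L] {ζ : L} {n : ℕ} (h : IsPrimitiveRoot ζ n) :
    n.totient ≤ Module.finrank ℚ L := by
  rcases n.eq_zero_or_pos with rfl | hn
  · simp
  simpa using h.lcm_totient_le_finrank h (by simpa using Polynomial.cyclotomic.irreducible_rat hn)

theorem geom_sum₂_eq_pow_mul_geom_sum_div {K : Type*} [Semifield K] (x : K) {y : K} (hy : y ≠ 0)
    (n : ℕ) :
    ∑ i ∈ range (n + 1), x ^ i * y ^ (n - i) = y ^ n * ∑ i ∈ range (n + 1), (x / y) ^ i := by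
  rw [mul_sum]
  refine sum_congr rfl fun i hi => ?_
  rw [div_pow, ← Nat.sub_add_cancel (Nat.lt_succ_iff.mp (mem_range.mp hi)), pow_add,
    Nat.add_sub_cancel]
  field_simp

theorem one_lt_orderOf_of_geom_sum_eq_zero {R : Type*} [Ring R] [CharZero R] {ζ : R} {n : ℕ}
    (hn : 0 < n) (h : ∑ i ∈ range n, ζ ^ i = 0) : 1 < orderOf ζ := by
  have hpow : ζ ^ n = 1 := by
    rw [← sub_eq_zero, ← geom_sum_mul, h, zero_mul]
  have hne : ζ ≠ 1 := by
    rintro rfl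
    simp [hn.ne'] at h
  have hpos : 0 < orderOf ζ :=
    orderOf_pos_iff.mpr (isOfFinOrder_iff_pow_eq_one.mpr ⟨n, hn, hpow⟩)
  have : orderOf ζ ≠ 1 := fun h1 => hne (orderOf_eq_one_iff.mp h1)
  omega

theorem stmt_14_general (d : ℕ) (K : Type*) [Field K] [Algebra ℚ K]
    [FiniteDimensional ℚ K] (hK : Module.finrank ℚ K ≤ d)
    (α β : K) (hβ : β ≠ 0) (u : ℕ → K)
    (hu : ∀ ν : ℕ, u ν = ∑ j ∈ Finset.range (ν + 1), α ^ j * β ^ (ν - j)) :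
    (∃ ν : ℕ, 1 ≤ ν ∧ u ν = 0) → ∃ ν : ℕ, 1 ≤ ν ∧ ν ≤ nu0 d - 1 ∧ u ν = 0 := by
  rintro ⟨ν, -, hν⟩
  have : CharZero K := charZero_of_injective_algebraMap (algebraMap ℚ K).injective
  set ζ := α / β
  have hu' (n : ℕ) : u n = β ^ n * ∑ i ∈ range (n + 1), ζ ^ i := by
    rw [hu, geom_sum₂_eq_pow_mul_geom_sum_div α hβ]
  have hsum : ∑ i ∈ range (ν + 1), ζ ^ i = 0 :=
    (mul_eq_zero.mp (hu' ν ▸ hν)).resolve_left (pow_ne_zero _ hβ)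
  have hm : 1 < orderOf ζ := one_lt_orderOf_of_geom_sum_eq_zero ν.succ_pos hsum
  have hprim : IsPrimitiveRoot ζ (orderOf ζ) := IsPrimitiveRoot.orderOf ζ
  have hle : orderOf ζ ≤ nu0 d := le_nu0 (by omega) (hprim.totient_le_finrank_rat.trans hK)
  refine ⟨orderOf ζ - 1, by omega, by omega, ?_⟩
  rw [hu', Nat.sub_add_cancel hm.le, hprim.geom_sum_eq_zero hm, mul_zero]

/-- The field-theoretic content of Lemma 2.1: in a number field of degree at most `d`,
if `u_ν = ∑_{j≤ν} α^j β^{ν−j}` vanishes for some `ν ≥ 1`, then it already vanishes for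
some `ν` with `1 ≤ ν ≤ ν₀(d) − 1`. -/
theorem stmt_14 (d : ℕ) (hd : 1 ≤ d) (K : Type*) [Field K] [Algebra ℚ K]
    [FiniteDimensional ℚ K] (hK : Module.finrank ℚ K ≤ d)
    (α β : K) (hα : α ≠ 0) (hβ : β ≠ 0) (u : ℕ → K)
    (hu : ∀ ν : ℕ, u ν = ∑ j ∈ Finset.range (ν + 1), α ^ j * β ^ (ν - j)) :
    (∃ ν : ℕ, 1 ≤ ν ∧ u ν = 0) → ∃ ν : ℕ, 1 ≤ ν ∧ ν ≤ nu0 d - 1 ∧ u ν = 0 :=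
  stmt_14_general d K hK α β hβ u hu
end

section
/- Let p be a prime number and let S(1,1;p) := ∑_{x=1}^{p−1} exp(2πi·(x + x̄)/p) ∈ ℂ, where for each x ∈ {1, …, p−1}, x̄ denotes the unique integer in {1, …, p−1} with x·x̄ ≡ 1 (mod p) (a classical Kloosterman sum). Define a sequence (u_ν)_{ν≥0} of complex numbers by u₀ = 1, u₁ = S(1,1;p), and u_{ν+1} = S(1,1;p)·u_ν − p·u_{ν−1} for ν ≥ 1. Then u_ν ≠ 0 for every ν ≥ 0. (Equivalently: if α, β ∈ ℂ satisfy α + β = S(1,1;p) and α·β = p, then α^{ν+1} ≠ β^{ν+1} for all ν ≥ 0; in particular α/β is not a root of unity.) -/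
open scoped Classical

/-- The classical Kloosterman sum `S(1,1;p) = ∑_{x=1}^{p-1} e((x + x̄)/p)`, where
`x̄` is the inverse of `x` modulo `p`. -/
noncomputable def kloosterman (p : ℕ) : ℂ :=
  ∑ x ∈ Finset.Icc 1 (p - 1),
    Complex.exp (2 * Real.pi * Complex.I *
      (((x : ℝ) + ((((x : ZMod p))⁻¹).val : ℝ)) / (p : ℝ)))

/-- Integer polynomial lifting the Kloosterman sum: substitute `ζ_p` for `X`. -/
noncomputable def kloostermanPoly (p : ℕ) : Polynomial ℤ :=
  ∑ x ∈ Finset.Icc 1 (p - 1), Polynomial.X ^ (x + (((x : ZMod p))⁻¹).val)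

/-- Integer polynomial lifting `u ν`. -/
noncomputable def uPoly (p : ℕ) : ℕ → Polynomial ℤ
  | 0 => 1
  | 1 => kloostermanPoly p
  | (ν + 2) => kloostermanPoly p * uPoly p (ν + 1) - Polynomial.C (p : ℤ) * uPoly p ν

/-- Proposition 4: the coefficients `u_ν = λ_S(p^ν)` defined by the Kloosterman-sum
Euler factor never vanish. -/
theorem stmt_15 (p : ℕ) (hp : p.Prime) (u : ℕ → ℂ)
    (h0 : u 0 = 1) (h1 : u 1 = kloosterman p)
    (hrec : ∀ ν : ℕ, 1 ≤ ν → u (ν + 1) = kloosterman p * u ν - (p : ℂ) * u (ν - 1)) :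
    ∀ ν : ℕ, u ν ≠ 0 := by
  haveI : Fact p.Prime := ⟨hp⟩
  have hp0 : (p : ℕ) ≠ 0 := hp.ne_zero
  set ζ : ℂ := Complex.exp (2 * Real.pi * Complex.I / p) with hζ
  have hprim : IsPrimitiveRoot ζ p := Complex.isPrimitiveRoot_exp p hp0
  -- evaluation of the polynomial lift at ζ gives the Kloosterman sum
  have hQ : Polynomial.aeval ζ (kloostermanPoly p) = kloosterman p := by
    rw [kloostermanPoly, kloosterman, map_sum]
    refine Finset.sum_congr rfl fun x hx => ?_
    rw [map_pow, Polynomial.aeval_X, hζ, ← Complex.exp_nat_mul]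
    congr 1
    have : (p : ℂ) ≠ 0 := by exact_mod_cast hp0
    push_cast
    field_simp
  -- evaluation of the lift recovers u
  have key : ∀ ν : ℕ, Polynomial.aeval ζ (uPoly p ν) = u ν ∧
      Polynomial.aeval ζ (uPoly p (ν + 1)) = u (ν + 1) := by
    intro ν
    induction ν with
    | zero => exact ⟨by simp [uPoly, h0], by simpa [uPoly, h1] using hQ⟩
    | succ n ih =>
      refine ⟨ih.2, ?_⟩
      have := hrec (n + 1) (by omega)
      simp only [Nat.add_sub_cancel] at this
      rw [show n + 1 + 1 = n + 2 from rfl, uPoly, map_sub, map_mul, map_mul, hQ,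
        Polynomial.aeval_C, ih.1, ih.2, this]
      push_cast
      ring
  -- evaluation at 1 over ZMod p gives (-1)^ν
  have hQ1 : Polynomial.aeval (1 : ZMod p) (kloostermanPoly p) = -1 := by
    rw [kloostermanPoly, map_sum]
    simp only [map_pow, Polynomial.aeval_X, one_pow]
    rw [Finset.sum_const, Nat.card_Icc, nsmul_eq_mul, mul_one, Nat.add_sub_cancel,
      Nat.cast_sub hp.one_lt.le, ZMod.natCast_self]
    ring
  have key1 : ∀ ν : ℕ, Polynomial.aeval (1 : ZMod p) (uPoly p ν) = (-1) ^ ν := by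
    have : ∀ ν : ℕ, Polynomial.aeval (1 : ZMod p) (uPoly p ν) = (-1) ^ ν ∧
        Polynomial.aeval (1 : ZMod p) (uPoly p (ν + 1)) = (-1) ^ (ν + 1) := by
      intro ν
      induction ν with
      | zero => exact ⟨by simp [uPoly], by simpa [uPoly] using hQ1⟩
      | succ n ih =>
        refine ⟨ih.2, ?_⟩
        rw [show n + 1 + 1 = n + 2 from rfl, uPoly, map_sub, map_mul, map_mul, hQ1,
          Polynomial.aeval_C, ih.1, ih.2]
        simp [ZMod.natCast_self]
        ring
    exact fun ν => (this ν).1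
  intro ν hu
  -- ζ is a root of uPoly p ν, so cyclotomic p ∣ uPoly p ν
  have hroot : Polynomial.aeval ζ (uPoly p ν) = 0 := by rw [(key ν).1, hu]
  have hdvd : Polynomial.cyclotomic p ℤ ∣ uPoly p ν := by
    rw [Polynomial.cyclotomic_eq_minpoly hprim hp.pos]
    exact minpoly.isIntegrallyClosed_dvd (hprim.isIntegral hp.pos) hroot
  obtain ⟨c, hc⟩ := hdvd
  have : Polynomial.aeval (1 : ZMod p) (uPoly p ν) = 0 := by
    rw [hc, map_mul]
    have : Polynomial.aeval (1 : ZMod p) (Polynomial.cyclotomic p ℤ) = 0 := by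
      rw [Polynomial.aeval_def, Polynomial.eval₂_eq_eval_map,
        show (algebraMap ℤ (ZMod p)) = Int.castRingHom (ZMod p) from rfl,
        Polynomial.map_cyclotomic_int, Polynomial.eval_one_cyclotomic_prime,
        ZMod.natCast_self]
    rw [this, zero_mul]
  rw [key1 ν] at this
  exact (pow_ne_zero ν (neg_ne_zero.mpr one_ne_zero)) this
end

section
/- For every integer P ≥ 1 there is the following asymptotic, with implied constant depending at most on ω(P), the number of distinct prime factors of P: for all real x ≥ 3, #{n ∈ ℕ : 1 ≤ n ≤ x and for every prime p dividing P the p-adic valuation v_p(n) is even} = (∏_{p ∣ P} (1 + 1/p)^{−1})·x + O((log x)^{ω(P)}). -/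
/-!
Let `A_F(N)` count the `n ≤ N` with even valuation at every prime of `F`. For a prime `q ∉ F`,
splitting by `q ∣ n` (and noting that `q ∣ n` with even `v_q(n)` forces `q² ∣ n`) gives
`A_{F∪q}(N) + A_F(N/q) = A_F(N) + A_{F∪q}(N/q²)`. As `(1 + 1/q)⁻¹ (1 - 1/q²) = 1 - 1/q`, the
errors `E_F(y) = A_F(⌊y⌋) - δ_F y` satisfy the same relation, so each of the `O(log y)` steps
`y ↦ y/q²` down to `y < 1` changes `E_{F∪q}` by at most twice the bound on `E_F`. Induction on `F`
gives `|E_F(y)| ≤ 3^|F| (1 + log⁺ y)^|F|`.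
-/

open Finset Real

namespace Nat

lemma factorization_prime_mul_of_ne {q p : ℕ} (hq : q.Prime) (hpq : p ≠ q) (m : ℕ) :
    (q * m).factorization p = m.factorization p := by
  rcases eq_or_ne m 0 with rfl | hm
  · simp
  rw [factorization_mul hq.ne_zero hm, Finsupp.add_apply, hq.factorization,
    Finsupp.single_eq_of_ne hpq, zero_add]

lemma even_factorization_sq_mul_iff {q : ℕ} (hq : q.Prime) (m : ℕ) :
    Even ((q ^ 2 * m).factorization q) ↔ Even (m.factorization q) := by
  rcases eq_or_ne m 0 with rfl | hm
  · simp
  rw [factorization_mul (pow_ne_zero 2 hq.ne_zero) hm, Finsupp.add_apply, hq.factorization_pow,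
    Finsupp.single_eq_same, Nat.even_add]
  simp

end Nat

lemma card_filter_Icc_and_dvd {q : ℕ} (hq : 0 < q) (N : ℕ) (P : ℕ → Prop) [DecidablePred P] :
    #{n ∈ Icc 1 N | P n ∧ q ∣ n} = #{m ∈ Icc 1 (N / q) | P (q * m)} := by
  symm
  apply card_nbij (q * ·)
  · intro m hm
    simp only [coe_filter, mem_Icc, Set.mem_ofPred_eq, Nat.le_div_iff_mul_le hq] at hm ⊢
    exact ⟨⟨by nlinarith, by linarith⟩, hm.2, dvd_mul_right q m⟩
  · intro a _ b _ h
    exact Nat.eq_of_mul_eq_mul_left hq h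
  · rintro n hn
    simp only [coe_filter, mem_Icc, Set.mem_ofPred_eq] at hn
    obtain ⟨⟨h1, hN⟩, hP, m, rfl⟩ := hn
    refine ⟨m, ?_, rfl⟩
    simp only [coe_filter, mem_Icc, Set.mem_ofPred_eq, Nat.le_div_iff_mul_le hq]
    exact ⟨⟨Nat.pos_of_ne_zero (by rintro rfl; simp at h1), by linarith⟩, hP⟩

lemma card_filter_Icc_eq_add (N q : ℕ) (P : ℕ → Prop) [DecidablePred P] :
    #{n ∈ Icc 1 N | P n} = #{n ∈ Icc 1 N | P n ∧ q ∣ n} + #{n ∈ Icc 1 N | P n ∧ ¬ q ∣ n} := by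
  rw [← filter_filter, ← filter_filter, card_filter_add_card_filter_not]

def EvenValuationsAt (F : Finset ℕ) (n : ℕ) : Prop :=
  ∀ p ∈ F, Even (n.factorization p)

instance (F : Finset ℕ) : DecidablePred (EvenValuationsAt F) := fun n =>
  inferInstanceAs (Decidable (∀ p ∈ F, Even (n.factorization p)))

namespace EvenValuationsAt

variable {q : ℕ} {F : Finset ℕ}

lemma prime_mul_iff (hq : q.Prime) (hqF : q ∉ F) (m : ℕ) :
    EvenValuationsAt F (q * m) ↔ EvenValuationsAt F m := by
  refine forall₂_congr fun p hp => ?_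
  rw [Nat.factorization_prime_mul_of_ne hq (ne_of_mem_of_not_mem hp hqF)]

lemma insert_sq_mul_iff (hq : q.Prime) (m : ℕ) :
    EvenValuationsAt (insert q F) (q ^ 2 * m) ↔ EvenValuationsAt (insert q F) m := by
  refine forall₂_congr fun p _ => ?_
  rcases eq_or_ne p q with rfl | hpq
  · exact Nat.even_factorization_sq_mul_iff hq m
  · rw [sq, mul_assoc, Nat.factorization_prime_mul_of_ne hq hpq,
      Nat.factorization_prime_mul_of_ne hq hpq]

lemma insert_iff_of_not_dvd {n : ℕ} (hqn : ¬ q ∣ n) :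
    EvenValuationsAt (insert q F) n ↔ EvenValuationsAt F n := by
  simp [EvenValuationsAt, Nat.factorization_eq_zero_of_not_dvd hqn]

lemma insert_and_dvd_iff (hq : q.Prime) {n : ℕ} (hn : n ≠ 0) :
    EvenValuationsAt (insert q F) n ∧ q ∣ n ↔ EvenValuationsAt (insert q F) n ∧ q ^ 2 ∣ n := by
  refine and_congr_right fun h => ?_
  have hev : Even (n.factorization q) := h q (mem_insert_self q F)
  rw [hq.pow_dvd_iff_le_factorization hn, hq.dvd_iff_one_le_factorization hn]
  obtain ⟨r, hr⟩ := hev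
  omega

end EvenValuationsAt

noncomputable def evenValuationCount (F : Finset ℕ) (N : ℕ) : ℕ :=
  #{n ∈ Icc 1 N | EvenValuationsAt F n}

lemma evenValuationCount_insert {q : ℕ} (hq : q.Prime) {F : Finset ℕ} (hqF : q ∉ F) (N : ℕ) :
    evenValuationCount (insert q F) N + evenValuationCount F (N / q)
      = evenValuationCount F N + evenValuationCount (insert q F) (N / q ^ 2) := by
  have hF : evenValuationCount F N = _ := card_filter_Icc_eq_add N q (EvenValuationsAt F)
  have hA : evenValuationCount (insert q F) N = _ :=
    card_filter_Icc_eq_add N q (EvenValuationsAt (insert q F))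
  have hFdvd : #{n ∈ Icc 1 N | EvenValuationsAt F n ∧ q ∣ n} = evenValuationCount F (N / q) := by
    rw [card_filter_Icc_and_dvd hq.pos]
    simp only [EvenValuationsAt.prime_mul_iff hq hqF]
    rfl
  have hAdvd : #{n ∈ Icc 1 N | EvenValuationsAt (insert q F) n ∧ q ∣ n}
      = evenValuationCount (insert q F) (N / q ^ 2) := by
    rw [filter_congr fun n hn => EvenValuationsAt.insert_and_dvd_iff hq
      (by simp only [mem_Icc] at hn; omega), card_filter_Icc_and_dvd (pow_pos hq.pos 2)]
    simp only [EvenValuationsAt.insert_sq_mul_iff hq]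
    rfl
  have hAndvd : #{n ∈ Icc 1 N | EvenValuationsAt (insert q F) n ∧ ¬ q ∣ n}
      = #{n ∈ Icc 1 N | EvenValuationsAt F n ∧ ¬ q ∣ n} :=
    congrArg card <| filter_congr fun n _ =>
      and_congr_left EvenValuationsAt.insert_iff_of_not_dvd
  omega

lemma evenValuationCount_empty (N : ℕ) : evenValuationCount ∅ N = N := by
  simp [evenValuationCount, EvenValuationsAt]

noncomputable def evenValuationDensity (F : Finset ℕ) : ℝ :=
  ∏ p ∈ F, ((1 : ℝ) + 1 / (p : ℝ))⁻¹

lemma evenValuationDensity_nonneg (F : Finset ℕ) : 0 ≤ evenValuationDensity F :=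
  prod_nonneg fun _ _ => by positivity

lemma evenValuationDensity_le_one (F : Finset ℕ) : evenValuationDensity F ≤ 1 :=
  prod_le_one (fun _ _ => by positivity) fun _ _ =>
    inv_le_one_of_one_le₀ (le_add_of_nonneg_right (by positivity))

noncomputable def evenValuationError (F : Finset ℕ) (y : ℝ) : ℝ :=
  evenValuationCount F ⌊y⌋₊ - evenValuationDensity F * y

lemma abs_evenValuationError_le_one_of_lt_one (F : Finset ℕ) {y : ℝ} (hy0 : 0 ≤ y)
    (hy1 : y < 1) : |evenValuationError F y| ≤ 1 := by
  have hcount : evenValuationCount F ⌊y⌋₊ = 0 := by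
    simp [evenValuationCount, Nat.floor_eq_zero.2 hy1]
  rw [evenValuationError, hcount, Nat.cast_zero, zero_sub, abs_neg,
    abs_of_nonneg (mul_nonneg (evenValuationDensity_nonneg F) hy0)]
  exact mul_le_one₀ (evenValuationDensity_le_one F) hy0 hy1.le

lemma evenValuationError_insert_sub {q : ℕ} (hq : q.Prime) {F : Finset ℕ} (hqF : q ∉ F)
    (y : ℝ) :
    evenValuationError (insert q F) y - evenValuationError (insert q F) (y / q ^ 2)
      = evenValuationError F y - evenValuationError F (y / q) := by
  have hcount := evenValuationCount_insert hq hqF ⌊y⌋₊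
  have hq0 : (q : ℝ) ≠ 0 := by exact_mod_cast hq.ne_zero
  have hq1 : (q : ℝ) + 1 ≠ 0 := by positivity
  rw [← Nat.floor_div_natCast, ← Nat.floor_div_natCast, Nat.cast_pow] at hcount
  simp only [evenValuationError, evenValuationDensity, prod_insert hqF]
  have := congrArg (Nat.cast (R := ℝ)) hcount
  push_cast at this
  field_simp
  linear_combination (q : ℝ) * (q + 1) * this

lemma abs_le_of_abs_sub_comp_div_le {E : ℝ → ℝ} {r K Y : ℝ} (hr : 1 ≤ r) (hK : 0 ≤ K)
    (hsmall : ∀ y, 0 ≤ y → y < 1 → |E y| ≤ 1)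
    (hstep : ∀ y, 1 ≤ y → y ≤ Y → |E y - E (y / r)| ≤ K) (J : ℕ) :
    ∀ y, 0 ≤ y → y ≤ Y → y < r ^ J → |E y| ≤ J * K + 1 := by
  induction J with
  | zero =>
    intro y hy0 _ hyJ
    simpa using hsmall y hy0 (by simpa using hyJ)
  | succ J ih =>
    intro y hy0 hyY hyJ
    rcases lt_or_ge y 1 with hy1 | hy1
    · have := hsmall y hy0 hy1
      push_cast
      nlinarith
    have hr0 : 0 < r := by linarith
    have hdiv := ih (y / r) (by positivity) ((div_le_self hy0 hr).trans hyY)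
      (by rwa [div_lt_iff₀ hr0, ← pow_succ])
    have := abs_sub_abs_le_abs_sub (E y) (E (y / r))
    push_cast
    linarith [hstep y hy1 hyY]

lemma le_exp_posLog {y : ℝ} (hy : 0 ≤ y) : y ≤ exp (log⁺ y) := by
  rcases le_or_gt y 1 with hy1 | hy1
  · exact hy1.trans (one_le_exp posLog_nonneg)
  · rw [posLog_eq_log (by rw [abs_of_nonneg hy]; exact hy1.le), exp_log (by linarith)]

lemma lt_pow_floor_posLog_add_one {y r : ℝ} (hy : 0 ≤ y) (hr : exp 1 ≤ r) :
    y < r ^ (⌊log⁺ y⌋₊ + 1) :=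
  calc y ≤ exp (log⁺ y) := le_exp_posLog hy
    _ < exp ((⌊log⁺ y⌋₊ + 1 : ℕ) : ℝ) := by
      gcongr; push_cast; exact Nat.lt_floor_add_one _
    _ = exp 1 ^ (⌊log⁺ y⌋₊ + 1) := by rw [← exp_nat_mul, mul_one]
    _ ≤ r ^ (⌊log⁺ y⌋₊ + 1) := by gcongr

theorem abs_evenValuationError_le {F : Finset ℕ} (hF : ∀ p ∈ F, p.Prime) {y : ℝ} (hy : 0 ≤ y) :
    |evenValuationError F y| ≤ 3 ^ #F * (1 + log⁺ y) ^ #F := by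
  induction F using Finset.induction_on generalizing y with
  | empty =>
    simp only [evenValuationError, evenValuationCount_empty, evenValuationDensity, prod_empty,
      one_mul, card_empty, pow_zero, abs_le]
    constructor <;> linarith [Nat.lt_floor_add_one y, Nat.floor_le hy]
  | @insert q F hqF ih =>
    have hq : q.Prime := hF q (mem_insert_self q F)
    set L := 1 + log⁺ y
    have hL : 1 ≤ L := le_add_of_nonneg_right posLog_nonneg
    have hq2 : (2 : ℝ) ≤ q := by exact_mod_cast hq.two_le
    have hIH : ∀ z, 0 ≤ z → z ≤ y → |evenValuationError F z| ≤ 3 ^ #F * L ^ #F := fun z hz hzy =>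
      (ih (fun p hp => hF p (mem_insert_of_mem hp)) hz).trans <| by
        gcongr
        exacts [add_nonneg zero_le_one posLog_nonneg, add_le_add_right (posLog_le_posLog hz hzy) 1]
    have hstep : ∀ z, 1 ≤ z → z ≤ y → |evenValuationError (insert q F) z
        - evenValuationError (insert q F) (z / (q : ℝ) ^ 2)| ≤ 2 * (3 ^ #F * L ^ #F) := by
      intro z hz hzy
      rw [evenValuationError_insert_sub hq hqF]
      have hzq : z / q ≤ y := (div_le_self (by linarith) (by linarith)).trans hzy
      linarith [abs_sub (evenValuationError F z) (evenValuationError F (z / q)),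
        hIH z (by linarith) hzy, hIH (z / q) (by positivity) hzq]
    have hr : exp 1 ≤ (q : ℝ) ^ 2 := by nlinarith [exp_one_lt_d9]
    have hbound := abs_le_of_abs_sub_comp_div_le (by nlinarith) (by positivity)
      (fun z hz0 hz1 => abs_evenValuationError_le_one_of_lt_one _ hz0 hz1) hstep _ y hy le_rfl
      (lt_pow_floor_posLog_add_one hy hr)
    have hJ : ((⌊log⁺ y⌋₊ + 1 : ℕ) : ℝ) ≤ L := by
      push_cast; linarith [Nat.floor_le (posLog_nonneg (x := y))]
    have hone : 1 ≤ 3 ^ #F * L ^ #F * L := one_le_mul_of_one_le_of_one_le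
      (one_le_mul_of_one_le_of_one_le (one_le_pow₀ (by norm_num)) (one_le_pow₀ hL)) hL
    calc |evenValuationError (insert q F) y|
        ≤ ((⌊log⁺ y⌋₊ + 1 : ℕ) : ℝ) * (2 * (3 ^ #F * L ^ #F)) + 1 := hbound
      _ ≤ L * (2 * (3 ^ #F * L ^ #F)) + 1 := by gcongr
      _ ≤ 3 ^ #(insert q F) * L ^ #(insert q F) := by
        rw [card_insert_of_notMem hqF, pow_succ, pow_succ]
        linarith

/-- The counting asymptotic of Corollary 7: for `P ≥ 1`, the number of `n ≤ x` all of
whose `p`-adic valuations at primes `p ∣ P` are even is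
`(∏_{p ∣ P} (1 + 1/p)^{−1})·x + O((log x)^{ω(P)})`, with implied constant depending
only on `ω(P)`. -/
theorem stmt_17 (k : ℕ) :
    ∃ C : ℝ, 0 < C ∧ ∀ P : ℕ, 1 ≤ P → P.primeFactors.card = k →
      ∀ x : ℝ, 3 ≤ x →
        |(((Finset.Icc 1 ⌊x⌋₊).filter
              (fun n : ℕ => ∀ p ∈ P.primeFactors, Even (n.factorization p))).card : ℝ)
            - (∏ p ∈ P.primeFactors, ((1 : ℝ) + 1 / (p : ℝ))⁻¹) * x|
          ≤ C * (Real.log x) ^ k := by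
  refine ⟨6 ^ k, by positivity, fun P _ hk x hx => ?_⟩
  have hlog : 1 ≤ log x := by
    rw [le_log_iff_exp_le (by linarith)]
    linarith [exp_one_lt_d9]
  have hposLog : log⁺ x = log x := posLog_eq_log (by rw [abs_of_nonneg (by linarith)]; linarith)
  calc |evenValuationError P.primeFactors x|
      ≤ 3 ^ k * (1 + log⁺ x) ^ k :=
        hk ▸ abs_evenValuationError_le (fun _ => Nat.prime_of_mem_primeFactors) (by linarith)
    _ ≤ 3 ^ k * (2 * log x) ^ k := by rw [hposLog]; gcongr; linarith
    _ = 6 ^ k * log x ^ k := by rw [mul_pow, ← mul_assoc, ← mul_pow]; norm_num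
end
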